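/- Let θ⁰, θ¹, θᵗ, θ₁^∞, θ₂^∞, θ₃^∞ ∈ ℂ with 2(θ⁰+θ¹+θᵗ+θ₁^∞)+θ₂^∞+θ₃^∞ = 0, set θ = θ⁰+θ¹+θᵗ and Θ = diag(θ₂^∞,θ₃^∞). Let I ⊆ ℝ be an open interval with 0,1 ∉ I, and let q₁,q₂,p₁,p₂,u : I → ℂ be differentiable with u(t) ≠ 0 for all t. Define Q(t) = [[q₁, u],[−q₂/u, q₁]] and P(t) = [[p₁/2, −p₂u],[(p₂q₂−θ−θ₁^∞−θ₂^∞)/u, p₁/2]]. Suppose the matrix differential equations t(t−1)Q′ = (Q−t)PQ(Q−1) + Q(Q−1)P(Q−t) + (θ⁰+1)Q(Q−1) + (θ+2θ₁^∞−1)Q(Q−t) + θᵗ(Q−1)(Q−t) and t(t−1)P′ = −(Q−1)P(Q−t)P − P(Q−t)PQ − PQ(Q−1)P − [(θ⁰+1){P(Q−1)+QP} + (θ+2θ₁^∞−1){P(Q−t)+QP} + θᵗ{P(Q−t)+(Q−1)P}] − (θ+θ₁^∞)(θ⁰+θᵗ+θ₁^∞) hold on I. Then (q₁,p₁,q₂,p₂)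 satisfies the Hamiltonian system dqᵢ/dt = ∂H/∂pᵢ, dpᵢ/dt = −∂H/∂qᵢ (i = 1,2), where H = H(t;q₁,p₁,q₂,p₂) is determined by t(t−1)H = tr[Q(Q−1)(Q−t)P² + {((θ⁰+1)I₂ − (θ+θ₁^∞)I₂ − Θ)Q(Q−1) + θᵗ(Q−1)(Q−t) + (θ+2θ₁^∞−1)Q(Q−t)}P + (θ+θ₁^∞)(θ⁰+θᵗ+θ₁^∞)Q]; in particular this trace is independent of u and is a polynomial function of (q₁,p₁,q₂,p₂). -/

import Mathlib

/-!
The parameter `u` is a gauge. Conjugation by `diag(u, 1)` sends `Q`, `P` at `u = 1` to `Q`, `P`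
at `u`, fixes `Θ`, and, being an algebra automorphism, commutes with every expression in `Q`, `P`,
`Θ` built from ring operations and complex scalars. So the trace defining `t(t-1)H` does not depend
on `u`; at `u = 1` it is the trace of a matrix with polynomial entries in `(q₁, p₁, q₂, p₂)`. The
two matrix equations are gauge covariant, so `q₁', p₁', q₂', p₂'` can be read off their right-hand
sides at `u = 1`. Along each coordinate line the matrix under the trace is a polynomial in that
coordinate, and comparing its derivative with those entries is a polynomial identity once `θ¹` and
`θ₃^∞` are eliminated with the two parameter relations.
-/

open Matrix

/-- `Q = [[q₁, u],[−q₂/u, q₁]]` with `a = q₁`, `c = q₂`, `v = u`. -/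
noncomputable def Qm (a c v : ℂ) : Matrix (Fin 2) (Fin 2) ℂ := !![a, v; -c/v, a]

/-- `P = [[p₁/2, −p₂u],[(p₂q₂−θ)/u, p₁/2]]` with `b = p₁`, `d = p₂`, `c = q₂`, `v = u`. -/
noncomputable def Pm (b d c θ v : ℂ) : Matrix (Fin 2) (Fin 2) ℂ :=
  !![b/2, -d*v; (d*c - θ)/v, b/2]

/-- The trace `tr[Q(Q−1)(Q−t)P² + {((θ⁰+1) − (θ+θ₁^∞) − Θ)Q(Q−1) + θᵗ(Q−1)(Q−t)
    + (θ+2θ₁^∞−1)Q(Q−t)}P + (θ+θ₁^∞)(θ⁰+θᵗ+θ₁^∞)Q]`, where `θ = θ⁰+θ¹+θᵗ`,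
    `Θ = diag(θ₂^∞, θ₃^∞)`, with `Q, P` parametrized by `(a,b,c,d,v) = (q₁,p₁,q₂,p₂,u)`. -/
noncomputable def trVI (θ0 θ1 θt θi1 θi2 θi3 t a b c d v : ℂ) : ℂ :=
  let θ : ℂ := θ0 + θ1 + θt
  let Θ : Matrix (Fin 2) (Fin 2) ℂ := Matrix.diagonal ![θi2, θi3]
  let Q : Matrix (Fin 2) (Fin 2) ℂ := Qm a c v
  let P : Matrix (Fin 2) (Fin 2) ℂ := Pm b d c (θ + θi1 + θi2) v
  (Q * (Q - 1) * (Q - t • (1 : Matrix (Fin 2) (Fin 2) ℂ)) * P * P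
    + (((θ0 + 1 - θ - θi1) • (1 : Matrix (Fin 2) (Fin 2) ℂ) - Θ) * (Q * (Q - 1))
        + θt • ((Q - 1) * (Q - t • (1 : Matrix (Fin 2) (Fin 2) ℂ)))
        + (θ + 2 * θi1 - 1) • (Q * (Q - t • (1 : Matrix (Fin 2) (Fin 2) ℂ)))) * P
    + ((θ + θi1) * (θ0 + θt + θi1)) • Q).trace

/-- The Hamiltonian `H^Mat_VI(t; q₁,p₁,q₂,p₂)`, determined by `t(t−1)H = trVI` (`u = 1`). -/
noncomputable def HVI (θ0 θ1 θt θi1 θi2 θi3 t a b c d : ℂ) : ℂ :=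
  (t * (t - 1))⁻¹ * trVI θ0 θ1 θt θi1 θi2 θi3 t a b c d 1

open Filter Topology

section NonAbelian

variable {A B F : Type*} [Ring A] [Algebra ℂ A] [Ring B] [Algebra ℂ B] [FunLike F A B]
  [AlgHomClass F ℂ A B]

def pviHamiltonian (θ0 θ θt θi1 t : ℂ) (Θ Q P : A) : A :=
  Q * (Q - 1) * (Q - t • 1) * P * P
    + (((θ0 + 1 - θ - θi1) • 1 - Θ) * (Q * (Q - 1)) + θt • ((Q - 1) * (Q - t • 1))
        + (θ + 2 * θi1 - 1) • (Q * (Q - t • 1))) * P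
    + ((θ + θi1) * (θ0 + θt + θi1)) • Q

-- The right-hand sides of the equations for `t(t-1)Q'` and `t(t-1)P'`.
def pviFlowQ (θ0 θ θt θi1 t : ℂ) (Q P : A) : A :=
  (Q - t • 1) * P * Q * (Q - 1) + Q * (Q - 1) * P * (Q - t • 1) + (θ0 + 1) • (Q * (Q - 1))
    + (θ + 2 * θi1 - 1) • (Q * (Q - t • 1)) + θt • ((Q - 1) * (Q - t • 1))

def pviFlowP (θ0 θ θt θi1 t : ℂ) (Q P : A) : A :=
  -((Q - 1) * P * (Q - t • 1) * P) - P * (Q - t • 1) * P * Q - P * Q * (Q - 1) * P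
    - ((θ0 + 1) • (P * (Q - 1) + Q * P) + (θ + 2 * θi1 - 1) • (P * (Q - t • 1) + Q * P)
        + θt • (P * (Q - t • 1) + (Q - 1) * P))
    - ((θ + θi1) * (θ0 + θt + θi1)) • 1

variable (f : F) (θ0 θ θt θi1 t : ℂ) (Θ Q P : A)

lemma map_pviHamiltonian :
    f (pviHamiltonian θ0 θ θt θi1 t Θ Q P) = pviHamiltonian θ0 θ θt θi1 t (f Θ) (f Q) (f P) := by
  simp [pviHamiltonian]

lemma map_pviFlowQ : f (pviFlowQ θ0 θ θt θi1 t Q P) = pviFlowQ θ0 θ θt θi1 t (f Q) (f P) := by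
  simp [pviFlowQ]

lemma map_pviFlowP : f (pviFlowP θ0 θ θt θi1 t Q P) = pviFlowP θ0 θ θt θi1 t (f Q) (f P) := by
  simp [pviFlowP]

end NonAbelian

lemma trVI_one_eq (θ0 θ1 θt θi1 θi2 θi3 t q₁ p₁ q₂ p₂ : ℂ) :
    trVI θ0 θ1 θt θi1 θi2 θi3 t q₁ p₁ q₂ p₂ 1
      = (pviHamiltonian θ0 (θ0 + θ1 + θt) θt θi1 t (diagonal ![θi2, θi3]) (Qm q₁ q₂ 1)
          (Pm p₁ p₂ q₂ (θ0 + θ1 + θt + θi1 + θi2) 1)).trace :=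
  rfl

section Gauge

def gaugeMatrix (w : ℂˣ) : (Matrix (Fin 2) (Fin 2) ℂ)ˣ where
  val := diagonal ![(w : ℂ), 1]
  inv := diagonal ![(w⁻¹ : ℂˣ), 1]
  val_inv := by ext i j; fin_cases i <;> fin_cases j <;> simp
  inv_val := by ext i j; fin_cases i <;> fin_cases j <;> simp

noncomputable def gaugeConj (w : ℂˣ) : Matrix (Fin 2) (Fin 2) ℂ ≃ₐ[ℂ] Matrix (Fin 2) (Fin 2) ℂ :=
  MulSemiringAction.toAlgEquiv ℂ _ (ConjAct.toConjAct (gaugeMatrix w))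

variable (w : ℂˣ)

lemma gaugeConj_apply (M : Matrix (Fin 2) (Fin 2) ℂ) :
    gaugeConj w M = !![M 0 0, w * M 0 1; M 1 0 / w, M 1 1] := by
  rw [eta_fin_two M]
  simp [gaugeConj, ConjAct.units_smul_def, gaugeMatrix, diagonal_fin_two, div_eq_mul_inv, mul_comm]

lemma trace_gaugeConj (M : Matrix (Fin 2) (Fin 2) ℂ) : (gaugeConj w M).trace = M.trace := by
  simp [gaugeConj_apply, trace_fin_two]

lemma gaugeConj_diagonal (x y : ℂ) : gaugeConj w (diagonal ![x, y]) = diagonal ![x, y] := by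
  simp [diagonal_fin_two, gaugeConj_apply]

lemma gaugeConj_Qm (q₁ q₂ : ℂ) : gaugeConj w (Qm q₁ q₂ 1) = Qm q₁ q₂ w := by
  simp [Qm, gaugeConj_apply]

lemma gaugeConj_Pm (p₁ p₂ q₂ κ : ℂ) : gaugeConj w (Pm p₁ p₂ q₂ κ 1) = Pm p₁ p₂ q₂ κ w := by
  simp [Pm, gaugeConj_apply, mul_comm]

variable {θ0 θ θt θi1 t q₁ p₁ q₂ p₂ κ : ℂ}

lemma pviFlowQ_gauge {v : ℂ} (hv : v ≠ 0) :
    pviFlowQ θ0 θ θt θi1 t (Qm q₁ q₂ v) (Pm p₁ p₂ q₂ κ v)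
      = gaugeConj (.mk0 v hv) (pviFlowQ θ0 θ θt θi1 t (Qm q₁ q₂ 1) (Pm p₁ p₂ q₂ κ 1)) := by
  rw [map_pviFlowQ, gaugeConj_Qm, gaugeConj_Pm, Units.val_mk0]

lemma pviFlowP_gauge {v : ℂ} (hv : v ≠ 0) :
    pviFlowP θ0 θ θt θi1 t (Qm q₁ q₂ v) (Pm p₁ p₂ q₂ κ v)
      = gaugeConj (.mk0 v hv) (pviFlowP θ0 θ θt θi1 t (Qm q₁ q₂ 1) (Pm p₁ p₂ q₂ κ 1)) := by
  rw [map_pviFlowP, gaugeConj_Qm, gaugeConj_Pm, Units.val_mk0]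

lemma trVI_gauge {θ0 θ1 θt θi1 θi2 θi3 t q₁ p₁ q₂ p₂ v : ℂ} (hv : v ≠ 0) :
    trVI θ0 θ1 θt θi1 θi2 θi3 t q₁ p₁ q₂ p₂ v = trVI θ0 θ1 θt θi1 θi2 θi3 t q₁ p₁ q₂ p₂ 1 := by
  rw [trVI_one_eq, ← trace_gaugeConj (.mk0 v hv), map_pviHamiltonian, gaugeConj_diagonal,
    gaugeConj_Qm, gaugeConj_Pm, Units.val_mk0]
  rfl

end Gauge

open MvPolynomial in
noncomputable def trVIPoly (θ0 θ1 θt θi1 θi2 θi3 t : ℂ) : MvPolynomial (Fin 4) ℂ :=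
  (pviHamiltonian θ0 (θ0 + θ1 + θt) θt θi1 t (diagonal ![C θi2, C θi3]) !![X 0, 1; -X 2, X 0]
    !![C 2⁻¹ * X 1, -X 3; X 3 * X 2 - C (θ0 + θ1 + θt + θi1 + θi2), C 2⁻¹ * X 1]).trace

lemma trVI_one_eq_eval_trVIPoly (θ0 θ1 θt θi1 θi2 θi3 t q₁ p₁ q₂ p₂ : ℂ) :
    trVI θ0 θ1 θt θi1 θi2 θi3 t q₁ p₁ q₂ p₂ 1
      = MvPolynomial.eval ![q₁, p₁, q₂, p₂] (trVIPoly θ0 θ1 θt θi1 θi2 θi3 t) := by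
  rw [trVIPoly, AddMonoidHom.map_trace (MvPolynomial.eval ![q₁, p₁, q₂, p₂]),
    ← MvPolynomial.aeval_eq_eval, ← AlgHom.mapMatrix_apply, map_pviHamiltonian, trVI_one_eq]
  congr 2
  all_goals ext i j; fin_cases i <;> fin_cases j <;> simp [Qm, Pm, div_eq_inv_mul]

open Polynomial in
lemma Matrix.hasDerivAt_trace_map_eval {𝕜 n : Type*} [NontriviallyNormedField 𝕜] [Fintype n]
    (M : Matrix n n 𝕜[X]) (b : 𝕜) :
    HasDerivAt (fun x => (M.map (eval x)).trace) (M.map fun p => p.derivative.eval b).trace b := by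
  have h : ∀ x, (M.map (eval x)).trace = eval x M.trace := fun x =>
    (AddMonoidHom.map_trace (evalRingHom x) M).symm
  simp only [h]
  have h2 : (M.map fun p => p.derivative.eval b).trace = eval b (derivative M.trace) := by
    simp [Matrix.trace, eval_finsetSum]
  rw [h2]
  exact M.trace.hasDerivAt b

open Polynomial in
lemma hasDerivAt_trVI_one_comp (θ0 θ1 θt θi1 θi2 θi3 t : ℂ) (q₁ p₁ q₂ p₂ : ℂ[X]) (b : ℂ) :
    HasDerivAt
      (fun x => trVI θ0 θ1 θt θi1 θi2 θi3 t (q₁.eval x) (p₁.eval x) (q₂.eval x) (p₂.eval x) 1)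
      ((pviHamiltonian θ0 (θ0 + θ1 + θt) θt θi1 t ((diagonal ![θi2, θi3]).map C)
          !![q₁, 1; -q₂, q₁] !![C 2⁻¹ * p₁, -p₂; p₂ * q₂ - C (θ0 + θ1 + θt + θi1 + θi2), C 2⁻¹ * p₁]
        ).map fun p => p.derivative.eval b).trace b := by
  refine (Matrix.hasDerivAt_trace_map_eval _ b).congr_of_eventuallyEq (.of_forall fun x => ?_)
  dsimp only
  rw [← coe_aeval_eq_eval, ← AlgHom.mapMatrix_apply, map_pviHamiltonian, trVI_one_eq]
  congr 2
  all_goals ext i j; fin_cases i <;> fin_cases j <;> simp [Qm, Pm, div_eq_inv_mul, mul_comm]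

open Polynomial in
lemma hasDerivAt_trVI_one {θ0 θ1 θt θi1 θi2 θi3 θ : ℂ} (hθ : θ = θ0 + θ1 + θt)
    (hFuchs : 2 * (θ0 + θ1 + θt + θi1) + θi2 + θi3 = 0) (t q₁ p₁ q₂ p₂ : ℂ) :
    HasDerivAt (fun x => trVI θ0 θ1 θt θi1 θi2 θi3 t q₁ x q₂ p₂ 1)
      (pviFlowQ θ0 θ θt θi1 t (Qm q₁ q₂ 1) (Pm p₁ p₂ q₂ (θ + θi1 + θi2) 1) 0 0) p₁ ∧
    HasDerivAt (fun x => trVI θ0 θ1 θt θi1 θi2 θi3 t x p₁ q₂ p₂ 1)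
      (-2 * pviFlowP θ0 θ θt θi1 t (Qm q₁ q₂ 1) (Pm p₁ p₂ q₂ (θ + θi1 + θi2) 1) 0 0) q₁ ∧
    HasDerivAt (fun x => trVI θ0 θ1 θt θi1 θi2 θi3 t q₁ p₁ q₂ x 1)
      (q₂ * pviFlowQ θ0 θ θt θi1 t (Qm q₁ q₂ 1) (Pm p₁ p₂ q₂ (θ + θi1 + θi2) 1) 0 1
        - pviFlowQ θ0 θ θt θi1 t (Qm q₁ q₂ 1) (Pm p₁ p₂ q₂ (θ + θi1 + θi2) 1) 1 0) p₂ ∧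
    HasDerivAt (fun x => trVI θ0 θ1 θt θi1 θi2 θi3 t q₁ p₁ x p₂ 1)
      (pviFlowP θ0 θ θt θi1 t (Qm q₁ q₂ 1) (Pm p₁ p₂ q₂ (θ + θi1 + θi2) 1) 0 1
        + p₂ * pviFlowQ θ0 θ θt θi1 t (Qm q₁ q₂ 1) (Pm p₁ p₂ q₂ (θ + θi1 + θi2) 1) 0 1) q₂ := by
  have h₁ := hasDerivAt_trVI_one_comp θ0 θ1 θt θi1 θi2 θi3 t (C q₁) X (C q₂) (C p₂) p₁
  have h₂ := hasDerivAt_trVI_one_comp θ0 θ1 θt θi1 θi2 θi3 t X (C p₁) (C q₂) (C p₂) q₁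
  have h₃ := hasDerivAt_trVI_one_comp θ0 θ1 θt θi1 θi2 θi3 t (C q₁) (C p₁) (C q₂) X p₂
  have h₄ := hasDerivAt_trVI_one_comp θ0 θ1 θt θi1 θi2 θi3 t (C q₁) (C p₁) X (C p₂) q₂
  subst hθ
  obtain rfl : θi3 = -2 * (θ0 + θ1 + θt + θi1) - θi2 := by linear_combination hFuchs
  simp only [pviHamiltonian, pviFlowQ, pviFlowP, Qm, Pm, trace_fin_two, mul_apply, Fin.sum_univ_two,
    Matrix.add_apply, Matrix.sub_apply, Matrix.smul_apply, Matrix.neg_apply, Matrix.map_apply,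
    one_fin_two, diagonal_fin_two, of_apply, cons_val', cons_val_zero, cons_val_one, empty_val',
    cons_val_fin_one, smul_eq_mul, derivative_add, derivative_sub, derivative_mul, derivative_neg,
    derivative_C, derivative_X, derivative_one, derivative_zero, derivative_smul, eval_add,
    eval_sub, eval_mul, eval_neg, eval_C, eval_X, eval_one, eval_zero, eval_smul] at h₁ h₂ h₃ h₄ ⊢
  exact ⟨h₁.congr_deriv (by ring), h₂.congr_deriv (by ring), h₃.congr_deriv (by ring),
    h₄.congr_deriv (by ring)⟩

/-- On `u ≠ 0` one has `q₂ = -Q₁₀ Q₀₁` and `p₂ = -P₀₁ / Q₀₁`. -/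
lemma hasDerivAt_canonical_coords {q₁ q₂ p₁ p₂ u : ℝ → ℂ} {s : ℝ} {κ c : ℂ}
    {DQ DP R S : Matrix (Fin 2) (Fin 2) ℂ} (hu : ∀ᶠ r in 𝓝 s, u r ≠ 0)
    (hDQ : ∀ i j, HasDerivAt (fun r => Qm (q₁ r) (q₂ r) (u r) i j) (DQ i j) s)
    (hDP : ∀ i j, HasDerivAt (fun r => Pm (p₁ r) (p₂ r) (q₂ r) κ (u r) i j) (DP i j) s)
    (hQ : DQ = c • gaugeConj (.mk0 (u s) hu.self_of_nhds) R)
    (hP : DP = c • gaugeConj (.mk0 (u s) hu.self_of_nhds) S) :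
    HasDerivAt q₁ (c * R 0 0) s ∧ HasDerivAt p₁ (c * (2 * S 0 0)) s ∧
      HasDerivAt q₂ (c * (q₂ s * R 0 1 - R 1 0)) s ∧
      HasDerivAt p₂ (-(c * (S 0 1 + p₂ s * R 0 1))) s := by
  have hus := hu.self_of_nhds
  have hQ00 := hDQ 0 0
  have hQ01 := hDQ 0 1
  have hQ10 := hDQ 1 0
  have hP00 := hDP 0 0
  have hP01 := hDP 0 1
  simp only [hQ, hP, gaugeConj_apply, Qm, Pm, Matrix.smul_apply, of_apply, cons_val',
    cons_val_zero, cons_val_one, empty_val', cons_val_fin_one, Units.val_mk0, smul_eq_mul]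
    at hQ00 hQ01 hQ10 hP00 hP01
  refine ⟨hQ00, ?_, ?_, ?_⟩
  · refine ((hP00.const_mul 2).congr_of_eventuallyEq (.of_forall fun r => ?_)).congr_deriv ?_ <;>
      ring
  · refine ((hQ10.mul hQ01).neg.congr_of_eventuallyEq ?_).congr_deriv ?_
    · filter_upwards [hu] with r hr
      simp only [Pi.neg_apply, Pi.mul_apply]
      field_simp
    · field_simp
      ring
  · refine ((hP01.div hQ01 hus).neg.congr_of_eventuallyEq ?_).congr_deriv ?_
    · filter_upwards [hu] with r hr
      simp only [Pi.neg_apply, Pi.div_apply]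
      field_simp
    · field_simp
      ring

theorem matrix_PVI_is_Hamiltonian
    (θ0 θ1 θt θi1 θi2 θi3 : ℂ)
    (hFuchs : 2 * (θ0 + θ1 + θt + θi1) + θi2 + θi3 = 0)
    (θ : ℂ) (hθ : θ = θ0 + θ1 + θt)
    (α β : ℝ) (h0 : (0:ℝ) ∉ Set.Ioo α β) (h1 : (1:ℝ) ∉ Set.Ioo α β)
    (q1 q2 p1 p2 u : ℝ → ℂ) (hu : ∀ s ∈ Set.Ioo α β, u s ≠ 0)
    (DQ DP : ℝ → Matrix (Fin 2) (Fin 2) ℂ)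
    (hDQ : ∀ s ∈ Set.Ioo α β, ∀ i j,
      HasDerivAt (fun r : ℝ => Qm (q1 r) (q2 r) (u r) i j) (DQ s i j) s)
    (hDP : ∀ s ∈ Set.Ioo α β, ∀ i j,
      HasDerivAt (fun r : ℝ => Pm (p1 r) (p2 r) (q2 r) (θ + θi1 + θi2) (u r) i j) (DP s i j) s)
    (heqQ : ∀ s ∈ Set.Ioo α β,
      (fun Q P : Matrix (Fin 2) (Fin 2) ℂ =>
        ((s:ℂ) * ((s:ℂ) - 1)) • DQ s =
          (Q - (s:ℂ) • (1 : Matrix (Fin 2) (Fin 2) ℂ)) * P * Q * (Q - 1)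
          + Q * (Q - 1) * P * (Q - (s:ℂ) • (1 : Matrix (Fin 2) (Fin 2) ℂ))
          + (θ0 + 1) • (Q * (Q - 1))
          + (θ + 2 * θi1 - 1) • (Q * (Q - (s:ℂ) • (1 : Matrix (Fin 2) (Fin 2) ℂ)))
          + θt • ((Q - 1) * (Q - (s:ℂ) • (1 : Matrix (Fin 2) (Fin 2) ℂ))))
        (Qm (q1 s) (q2 s) (u s)) (Pm (p1 s) (p2 s) (q2 s) (θ + θi1 + θi2) (u s)))
    (heqP : ∀ s ∈ Set.Ioo α β,
      (fun Q P : Matrix (Fin 2) (Fin 2) ℂ =>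
        ((s:ℂ) * ((s:ℂ) - 1)) • DP s =
          -((Q - 1) * P * (Q - (s:ℂ) • (1 : Matrix (Fin 2) (Fin 2) ℂ)) * P)
          - P * (Q - (s:ℂ) • (1 : Matrix (Fin 2) (Fin 2) ℂ)) * P * Q
          - P * Q * (Q - 1) * P
          - ((θ0 + 1) • (P * (Q - 1) + Q * P)
              + (θ + 2 * θi1 - 1) • (P * (Q - (s:ℂ) • (1 : Matrix (Fin 2) (Fin 2) ℂ)) + Q * P)
              + θt • (P * (Q - (s:ℂ) • (1 : Matrix (Fin 2) (Fin 2) ℂ)) + (Q - 1) * P))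
          - ((θ + θi1) * (θ0 + θt + θi1)) • (1 : Matrix (Fin 2) (Fin 2) ℂ))
        (Qm (q1 s) (q2 s) (u s)) (Pm (p1 s) (p2 s) (q2 s) (θ + θi1 + θi2) (u s))) :
    -- the trace is independent of u
    (∀ t a b c d v w : ℂ, v ≠ 0 → w ≠ 0 →
      trVI θ0 θ1 θt θi1 θi2 θi3 t a b c d v = trVI θ0 θ1 θt θi1 θi2 θi3 t a b c d w) ∧
    -- the trace is a polynomial function of (q₁,p₁,q₂,p₂)
    (∀ t : ℂ, ∃ F : MvPolynomial (Fin 4) ℂ, ∀ a b c d v : ℂ, v ≠ 0 →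
      trVI θ0 θ1 θt θi1 θi2 θi3 t a b c d v = MvPolynomial.eval ![a, b, c, d] F) ∧
    -- Hamilton's equations
    (∀ s ∈ Set.Ioo α β,
      HasDerivAt q1
        (deriv (fun x => HVI θ0 θ1 θt θi1 θi2 θi3 (s:ℂ) (q1 s) x (q2 s) (p2 s)) (p1 s)) s ∧
      HasDerivAt p1
        (-(deriv (fun x => HVI θ0 θ1 θt θi1 θi2 θi3 (s:ℂ) x (p1 s) (q2 s) (p2 s)) (q1 s))) s ∧
      HasDerivAt q2
        (deriv (fun x => HVI θ0 θ1 θt θi1 θi2 θi3 (s:ℂ) (q1 s) (p1 s) (q2 s) x) (p2 s)) s ∧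
      HasDerivAt p2
        (-(deriv (fun x => HVI θ0 θ1 θt θi1 θi2 θi3 (s:ℂ) (q1 s) (p1 s) x (p2 s)) (q2 s))) s) := by
  refine ⟨fun t a b c d v w hv hw => ?_, fun t => ⟨trVIPoly θ0 θ1 θt θi1 θi2 θi3 t, ?_⟩, ?_⟩
  · rw [trVI_gauge hv, trVI_gauge hw]
  · intro a b c d v hv
    rw [trVI_gauge hv, trVI_one_eq_eval_trVIPoly]
  intro s hs
  have hσ : (s : ℂ) * ((s : ℂ) - 1) ≠ 0 := by
    refine mul_ne_zero ?_ (sub_ne_zero.mpr ?_) <;> norm_cast <;> rintro rfl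
    exacts [h0 hs, h1 hs]
  have hu' : ∀ᶠ r in 𝓝 s, u r ≠ 0 := eventually_of_mem (Ioo_mem_nhds hs.1 hs.2) hu
  have hQ := (heqQ s hs).trans (pviFlowQ_gauge hu'.self_of_nhds)
  have hP := (heqP s hs).trans (pviFlowP_gauge hu'.self_of_nhds)
  obtain ⟨hq₁, hp₁, hq₂, hp₂⟩ := hasDerivAt_canonical_coords hu' (hDQ s hs) (hDP s hs)
    (by rw [← hQ, inv_smul_smul₀ hσ]) (by rw [← hP, inv_smul_smul₀ hσ])
  obtain ⟨dp₁, dq₁, dp₂, dq₂⟩ := hasDerivAt_trVI_one hθ hFuchs s (q1 s) (p1 s) (q2 s) (p2 s)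
  simp only [HVI]
  rw [(dp₁.const_mul _).deriv, (dq₁.const_mul _).deriv, (dp₂.const_mul _).deriv,
    (dq₂.const_mul _).deriv]
  exact ⟨hq₁, by convert hp₁ using 1; ring, hq₂, hp₂⟩
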